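/- The logical codeword |k⟩_L of the nine-qutrit code is an ω^{2k} eigenvector of the stabilizer X⊗X⊗X⊗I⊗I⊗I⊗I⊗I⊗I, where X is the cyclic shift X e_j = e_{j+1 mod 3}; in particular |0⟩_L has eigenvalue 1, |1⟩_L has eigenvalue ω², and |2⟩_L has eigenvalue ω. -/
import Mathlib


open Matrix Kronecker

noncomputable def ω : ℂ := Complex.exp (2 * Real.pi * Complex.I / 3)

abbrev T3 := Fin 3 × Fin 3 × Fin 3
abbrev T9 := T3 × T3 × T3

noncomputable def chi (k : Fin 3) : T3 → ℂ :=
  fun v => if v.1 = v.2.1 ∧ v.2.1 = v.2.2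
    then ω ^ ((k : ℕ) * (v.1 : ℕ)) / Real.sqrt 3 else 0

noncomputable def codeL (k : Fin 3) : T9 → ℂ :=
  fun v => chi k v.1 * chi k v.2.1 * chi k v.2.2

/-- Cyclic shift X e_j = e_{j+1 mod 3}. -/
noncomputable def X : Matrix (Fin 3) (Fin 3) ℂ := !![0,0,1;1,0,0;0,1,0]

/-- The stabilizer X⊗X⊗X⊗I⊗I⊗I⊗I⊗I⊗I on (ℂ³)^{⊗9}. -/
noncomputable def stabX : Matrix T9 T9 ℂ :=
  (X ⊗ₖ (X ⊗ₖ X)) ⊗ₖ (1 : Matrix (T3 × T3) (T3 × T3) ℂ)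

lemma omega_cube : ω ^ 3 = 1 := by
  rw [ω, ← Complex.exp_nat_mul]
  rw [show (3:ℕ) * (2 * Real.pi * Complex.I / 3) = 2 * Real.pi * Complex.I by push_cast; ring]
  exact Complex.exp_two_pi_mul_I

lemma omega_six : ω ^ 6 = 1 := by
  rw [show (6:ℕ) = 3 * 2 from rfl, pow_mul, omega_cube, one_pow]

lemma omega_pow_mod (n : ℕ) : ω ^ n = ω ^ (n % 3) := by
  conv_lhs => rw [← Nat.div_add_mod n 3, pow_add, pow_mul, omega_cube, one_pow, one_mul]

lemma op4 : ω ^ 4 = ω := by rw [omega_pow_mod]; norm_num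
lemma op5 : ω ^ 5 = ω ^ 2 := by rw [omega_pow_mod]
lemma op7 : ω ^ 7 = ω := by rw [omega_pow_mod]; norm_num
lemma op8 : ω ^ 8 = ω ^ 2 := by rw [omega_pow_mod]

lemma kron_mulVec {α β : Type*} [Fintype α] [Fintype β]
    (A : Matrix α α ℂ) (B : Matrix β β ℂ) (f : α → ℂ) (g : β → ℂ) (p : α × β) :
    (A ⊗ₖ B).mulVec (fun q => f q.1 * g q.2) p = A.mulVec f p.1 * B.mulVec g p.2 := by
  simp only [Matrix.mulVec, dotProduct, Fintype.sum_prod_type, kroneckerMap_apply,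
    Finset.mul_sum, Finset.sum_mul]
  rw [Finset.sum_comm]
  apply Finset.sum_congr rfl; intro i _
  apply Finset.sum_congr rfl; intro j _
  ring

set_option maxHeartbeats 1000000 in
lemma chi_eigen (k : Fin 3) :
    (X ⊗ₖ (X ⊗ₖ X)).mulVec (chi k) = ω ^ (2 * (k : ℕ)) • chi k := by
  funext ⟨a, b, c⟩
  fin_cases a <;> fin_cases b <;> fin_cases c <;>
  · simp only [Matrix.mulVec, dotProduct, Fintype.sum_prod_type, kroneckerMap_apply,
      Fin.sum_univ_three, X, Pi.smul_apply, smul_eq_mul]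
    norm_num [chi] <;> fin_cases k <;> norm_num <;>
      ring_nf <;> simp [omega_cube, omega_six, op4, op5, op7, op8]

theorem codeL_stabX_eigen (k : Fin 3) :
    stabX.mulVec (codeL k) = ω ^ (2 * (k : ℕ)) • codeL k ∧ codeL k ≠ 0 := by
  constructor
  · have hc : codeL k =
        fun q : T9 => chi k q.1 * ((fun p : T3 × T3 => chi k p.1 * chi k p.2) q.2) := by
      funext q; simp [codeL, mul_assoc]
    funext v
    rw [stabX, hc]
    rw [kron_mulVec (X ⊗ₖ (X ⊗ₖ X)) (1 : Matrix (T3 × T3) (T3 × T3) ℂ) (chi k)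
      (fun p : T3 × T3 => chi k p.1 * chi k p.2) v, Matrix.one_mulVec, chi_eigen]
    simp only [Pi.smul_apply, smul_eq_mul, codeL]
    ring
  · intro h
    have := congrFun h ((0,0,0),(0,0,0),(0,0,0))
    simp [codeL, chi] at this
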